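/- arXiv:0810.4794 — 5 statements merged into one kernel-verified Lean document; each statement's English description precedes it below -/
import Mathlib

section
/- Let F ∈ C¹(ℝ×ℝⁿ×[0,1], ℝⁿ), and assume that for every t* ∈ ℝ, ζ ∈ ℝⁿ, ε ∈ [0,1] the Cauchy problem ẋ = F(t,x,ε), x(t*) = ζ has a unique solution x̃(·, t*, ζ, ε) defined on all of ℝ, depending continuously differentiably on (t, ζ, ε). Then for any t* ∈ ℝ and ξ* ∈ ℝⁿ there exists γ > 0 and a continuously differentiable map ζ : B_γ(0) × B_γ(ξ*) × [0,γ) → ℝⁿ with ζ(0, ξ*, 0) = ξ*, such that the function x(t, Δ, ξ, ε) := x̃(t, t*, ζ(Δ, ξ, ε), ε) is continuously differentiable on ℝ × B_γ(0) × B_γ(ξ*) × [0,γ) and satisfies the vector-time initial condition x^j(t* + Δ^j, Δ, ξ, ε) = ξ^j for every component j = 1,…,n; moreover ζ (hence the solution) is locally unique: it is the only point near ξ* whose solution satisfies this vector-time initial condition. -/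
open Set Metric Filter
open scoped NNReal

/-!
The initial point `ζ` solves the `n` equations `x̃ʲ(t* + Δʲ, t*, ζ, ε) = ξʲ`, with `(Δ, ε)` as
parameters. At `(Δ, ε) = (0, 0)` the left-hand side is `ζ` itself, so its `ζ`-derivative there is
the identity and the implicit function theorem applies. Since `ε` only ranges over `[0, 1]`, the
parameter domain is not open, so that theorem is proved here on `E × T` with `T` convex: the
mean value inequality makes each slice `ζ ↦ G (ζ, w)` a uniform `1/2`-perturbation of the
identity near the base point, which gives existence, uniqueness and Lipschitz dependence of the
solution on `(ξ, w)`; `C¹` regularity then follows from the easy half of the inverse function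
theorem applied to `(ζ, w) ↦ (G (ζ, w), w)`.
-/

section InverseFunction

variable {E F : Type*} [NormedAddCommGroup E] [NormedSpace ℝ E]
  [NormedAddCommGroup F] [NormedSpace ℝ F]

theorem contDiffOn_of_local_left_inverse [CompleteSpace F] {Φ : F → E} {Φ' : F → F →L[ℝ] E}
    {Ψ : E → F} {s : Set E} {t : Set F} (hs : UniqueDiffOn ℝ s)
    (hΦ : ∀ y ∈ t, HasFDerivWithinAt Φ (Φ' y) t y) (hΦ' : ContinuousOn Φ' t)
    (hΨ : ContinuousOn Ψ s) (hst : MapsTo Ψ s t) (hleft : ∀ x ∈ s, Φ (Ψ x) = x)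
    (hinv : ∀ x ∈ s, (Φ' (Ψ x)).IsInvertible) : ContDiffOn ℝ 1 Ψ s := by
  have hderiv : ∀ x ∈ s, HasFDerivWithinAt Ψ (Φ' (Ψ x)).inverse s x := by
    intro x hx
    obtain ⟨e, he⟩ := hinv x hx
    rw [← he, ContinuousLinearMap.inverse_equiv]
    exact .of_local_left_inverse ((hΨ x hx).tendsto_nhdsWithin hst) (he ▸ hΦ _ (hst hx)) hx
      (eventually_nhdsWithin_of_forall hleft)
  have hcont : ContinuousOn (fun x => (Φ' (Ψ x)).inverse) s := fun x hx =>
    ((hinv x hx).contDiffAt_map_inverse (n := 0)).continuousAt.comp_continuousWithinAt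
      (f := Φ' ∘ Ψ) (hΦ'.comp hΨ hst x hx)
  rw [show (1 : WithTop ℕ∞) = 0 + 1 from rfl, contDiffOn_succ_iff_fderivWithin hs]
  refine ⟨fun x hx => (hderiv x hx).differentiableWithinAt, by simp, ?_⟩
  exact contDiffOn_zero.2 (hcont.congr fun x hx => (hderiv x hx).fderivWithin (hs x hx))

theorem ContDiffOn.exists_approximatesLinearOn_inter_closedBall {f : E → F} {s : Set E}
    (hs : Convex ℝ s) (hsu : UniqueDiffOn ℝ s) (hf : ContDiffOn ℝ 1 f s) {x₀ : E} (hx₀ : x₀ ∈ s)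
    {c : ℝ≥0} (hc : 0 < c) : ∃ r > 0,
      ApproximatesLinearOn f (fderivWithin ℝ f s x₀) (s ∩ closedBall x₀ r) c ∧
      ∀ x ∈ s ∩ closedBall x₀ r, ‖fderivWithin ℝ f s x - fderivWithin ℝ f s x₀‖ ≤ c := by
  obtain ⟨ε, hε, h⟩ := Metric.continuousWithinAt_iff.1
    (hf.continuousOn_fderivWithin hsu le_rfl x₀ hx₀) c hc
  have hclose : ∀ x ∈ s ∩ closedBall x₀ (ε / 2),
      ‖fderivWithin ℝ f s x - fderivWithin ℝ f s x₀‖ ≤ c := fun x hx => by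
    simpa [dist_eq_norm] using (h hx.1 (hx.2.trans_lt (half_lt_self hε))).le
  refine ⟨ε / 2, half_pos hε, fun x hx y hy => ?_, hclose⟩
  exact (hs.inter (convex_closedBall _ _)).norm_image_sub_le_of_norm_hasFDerivWithin_le'
    (fun z hz => ((hf.differentiableOn one_ne_zero z hz.1).hasFDerivWithinAt).mono
      inter_subset_left) hclose hy hx

theorem ApproximatesLinearOn.injOn_of_id {f : E → E} {s : Set E} {c : ℝ≥0}
    (hf : ApproximatesLinearOn f (ContinuousLinearMap.id ℝ E) s c) (hc : c < 1) : InjOn f s := by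
  intro x hx y hy hxy
  have := hf x hx y hy
  rw [hxy, sub_self, zero_sub, norm_neg, ContinuousLinearMap.id_apply] at this
  have hc' : (c : ℝ) < 1 := by exact_mod_cast hc
  exact sub_eq_zero.1 (norm_le_zero_iff.1 (by nlinarith [norm_nonneg (x - y)]))

theorem ApproximatesLinearOn.surjOn_closedBall_of_id [CompleteSpace E] {f : E → E} {c : ℝ≥0}
    {b : E} {r : ℝ} (hf : ApproximatesLinearOn f (ContinuousLinearMap.id ℝ E) (closedBall b r) c)
    (hr : 0 ≤ r) : SurjOn f (closedBall b r) (closedBall (f b) ((1 - c) * r)) := by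
  simpa using hf.surjOn_closedBall_of_nonlinearRightInverse
    ⟨id, 1, by simp, fun _ => rfl⟩ hr subset_rfl

theorem ContinuousLinearMap.isInvertible_of_norm_sub_id_lt [CompleteSpace E] {A : E →L[ℝ] E}
    (h : ‖A - ContinuousLinearMap.id ℝ E‖ < 1) : A.IsInvertible := by
  obtain ⟨u, hu⟩ : IsUnit A := sub_sub_self 1 A ▸
    (Units.oneSub (1 - A) (by rwa [norm_sub_rev, ContinuousLinearMap.one_def])).isUnit
  exact ⟨ContinuousLinearEquiv.unitsEquiv ℝ E u, by rw [← hu]; rfl⟩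

end InverseFunction

section ImplicitFunction

variable {E P : Type*} [NormedAddCommGroup E] [NormedSpace ℝ E]
  [NormedAddCommGroup P] [NormedSpace ℝ P]

theorem ContinuousLinearMap.isInvertible_prod_snd {φ : E × P →L[ℝ] E}
    (hφ : (φ ∘L inl ℝ E P).IsInvertible) : (φ.prod (snd ℝ E P)).IsInvertible := by
  set A := φ ∘L inl ℝ E P
  have hsplit : ∀ b v, φ (b, v) = A b + φ (0, v) := fun b v => by
    simp [A, ← map_add]
  refine .of_inverse (g := (A.inverse ∘L (fst ℝ E P - φ ∘L inr ℝ E P ∘L snd ℝ E P)).prod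
    (snd ℝ E P)) ?_ ?_
  · refine ContinuousLinearMap.ext fun ⟨x, v⟩ => ?_
    simp only [comp_apply, prod_apply, sub_apply, coe_fst',
      coe_snd', inr_apply, id_apply]
    rw [hsplit, hφ.self_apply_inverse, sub_add_cancel]
  · refine ContinuousLinearMap.ext fun ⟨b, v⟩ => ?_
    simp only [comp_apply, prod_apply, sub_apply, coe_fst',
      coe_snd', inr_apply, id_apply]
    rw [hsplit, add_sub_cancel_right, hφ.inverse_apply_self]

theorem ContinuousLinearMap.isInvertible_comp_inl_of_norm_sub_lt [CompleteSpace E]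
    {φ φ₀ : E × P →L[ℝ] E} (hφ₀ : φ₀ ∘L inl ℝ E P = ContinuousLinearMap.id ℝ E)
    (h : ‖φ - φ₀‖ < 1) : (φ ∘L inl ℝ E P).IsInvertible := by
  refine isInvertible_of_norm_sub_id_lt ?_
  calc ‖φ ∘L inl ℝ E P - ContinuousLinearMap.id ℝ E‖ = ‖(φ - φ₀) ∘L inl ℝ E P‖ := by
        rw [← hφ₀, sub_comp]
    _ ≤ ‖φ - φ₀‖ := by grw [opNorm_comp_le, norm_inl_le_one, mul_one]
    _ < 1 := h

theorem ApproximatesLinearOn.comp_prodMk_left {F : Type*} [NormedAddCommGroup F]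
    [NormedSpace ℝ F] {G : E × P → F} {φ : E × P →L[ℝ] F} {V : Set (E × P)} {c : ℝ≥0}
    (hG : ApproximatesLinearOn G φ V c) {s : Set E} {w : P} (hs : MapsTo (fun b => (b, w)) s V) :
    ApproximatesLinearOn (fun b => G (b, w)) (φ ∘L ContinuousLinearMap.inl ℝ E P) s c :=
  fun _ hb _ hb' => by simpa using hG _ (hs hb) _ (hs hb')

theorem ApproximatesLinearOn.norm_fst_sub_le {G : E × P → E} {φ : E × P →L[ℝ] E}
    {V : Set (E × P)} {c : ℝ≥0} (hG : ApproximatesLinearOn G φ V c)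
    (hφ : φ ∘L ContinuousLinearMap.inl ℝ E P = ContinuousLinearMap.id ℝ E)
    {p p' : E × P} (hp : p ∈ V) (hp' : p' ∈ V) :
    (1 - c) * ‖p'.1 - p.1‖ ≤ ‖G p' - G p‖ + (‖φ‖ + c) * ‖p'.2 - p.2‖ := by
  have hsplit : p'.1 - p.1 = (G p' - G p) - (G p' - G p - φ (p' - p)) - φ (0, p'.2 - p.2) := by
    have : φ (p' - p) = (p'.1 - p.1) + φ (0, p'.2 - p.2) := by
      rw [← ContinuousLinearMap.comp_inl_add_comp_inr, hφ]; rfl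
    rw [this]; abel
  have h1 : ‖p'.1 - p.1‖ ≤ ‖G p' - G p‖ + ‖G p' - G p - φ (p' - p)‖ + ‖φ (0, p'.2 - p.2)‖ := by
    rw [hsplit]
    exact (norm_sub_le _ _).trans (add_le_add_left (norm_sub_le _ _) _)
  have h2 := hG _ hp' _ hp
  have h3 : ‖φ (0, p'.2 - p.2)‖ ≤ ‖φ‖ * ‖p'.2 - p.2‖ := by
    simpa using φ.le_opNorm (0, p'.2 - p.2)
  have h4 : ‖p' - p‖ ≤ ‖p'.1 - p.1‖ + ‖p'.2 - p.2‖ := by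
    rw [Prod.norm_def]; exact max_le_add_of_nonneg (norm_nonneg _) (norm_nonneg _)
  nlinarith [c.coe_nonneg]

theorem ApproximatesLinearOn.continuousOn_implicit {G : E × P → E} {φ : E × P →L[ℝ] E}
    {V : Set (E × P)} {c : ℝ≥0} (hG : ApproximatesLinearOn G φ V c)
    (hφ : φ ∘L ContinuousLinearMap.inl ℝ E P = ContinuousLinearMap.id ℝ E) (hc : c < 1)
    {Z : E × P → E} {D : Set (E × P)} (hZV : ∀ q ∈ D, (Z q, q.2) ∈ V)
    (hGZ : ∀ q ∈ D, G (Z q, q.2) = q.1) : ContinuousOn Z D := by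
  refine (LipschitzOnWith.of_dist_le' (K := (1 + ‖φ‖ + c) / (1 - c))
    fun q hq q' hq' => ?_).continuousOn
  have key := hG.norm_fst_sub_le hφ (hZV q' hq') (hZV q hq)
  rw [hGZ q hq, hGZ q' hq'] at key
  have h1 : ‖q.1 - q'.1‖ ≤ ‖q - q'‖ := norm_fst_le (q - q')
  have h2 : ‖q.2 - q'.2‖ ≤ ‖q - q'‖ := norm_snd_le (q - q')
  have hc' : (0 : ℝ) < 1 - c := sub_pos.2 (by exact_mod_cast hc)
  rw [dist_eq_norm, dist_eq_norm, div_mul_eq_mul_div, le_div_iff₀ hc']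
  nlinarith [norm_nonneg φ, c.coe_nonneg]

theorem contDiffOn_implicit_of_continuousOn [CompleteSpace E] [CompleteSpace P] {G : E × P → E}
    {S : Set (E × P)} (hSu : UniqueDiffOn ℝ S) (hG : ContDiffOn ℝ 1 G S) {Z : E × P → E}
    {D : Set (E × P)} (hDu : UniqueDiffOn ℝ D) (hZ : ContinuousOn Z D)
    (hZS : ∀ q ∈ D, (Z q, q.2) ∈ S) (hGZ : ∀ q ∈ D, G (Z q, q.2) = q.1)
    (hinv : ∀ q ∈ D,
      (fderivWithin ℝ G S (Z q, q.2) ∘L ContinuousLinearMap.inl ℝ E P).IsInvertible) :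
    ContDiffOn ℝ 1 Z D := by
  have hΨ : ContDiffOn ℝ 1 (fun q => (Z q, q.2)) D :=
    contDiffOn_of_local_left_inverse (Φ := fun p => (G p, p.2))
      (Φ' := fun p => (fderivWithin ℝ G S p).prod (ContinuousLinearMap.snd ℝ E P)) hDu
      (fun p hp => (hG.differentiableOn one_ne_zero p hp).hasFDerivWithinAt.prodMk
        hasFDerivWithinAt_snd)
      ((ContinuousLinearMap.prodₗᵢ ℝ).continuous.comp_continuousOn
        ((hG.continuousOn_fderivWithin hSu le_rfl).prodMk continuousOn_const))
      (hZ.prodMk continuousOn_snd) hZS (fun q hq => by simp [hGZ q hq])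
      (fun q hq => ContinuousLinearMap.isInvertible_prod_snd (hinv q hq))
  exact contDiff_fst.comp_contDiffOn hΨ

theorem exists_implicitFunction_of_contDiffOn [CompleteSpace E] [CompleteSpace P]
    {G : E × P → E} {T : Set P} (hTc : Convex ℝ T) (hTu : UniqueDiffOn ℝ T)
    {b₀ : E} {q₀ : P} (hq₀ : q₀ ∈ T) (hG : ContDiffOn ℝ 1 G (univ ×ˢ T))
    (hA : fderivWithin ℝ G (univ ×ˢ T) (b₀, q₀) ∘L ContinuousLinearMap.inl ℝ E P =
      ContinuousLinearMap.id ℝ E) :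
    ∃ δ > 0, ∃ Z : E × P → E,
      ContDiffOn ℝ 1 Z (ball (G (b₀, q₀)) δ ×ˢ (T ∩ ball q₀ δ)) ∧
      ∀ ξ ∈ ball (G (b₀, q₀)) δ, ∀ w ∈ T ∩ ball q₀ δ,
        G (Z (ξ, w), w) = ξ ∧ ∀ b ∈ ball b₀ δ, G (b, w) = ξ → b = Z (ξ, w) := by
  set S : Set (E × P) := univ ×ˢ T
  have hSu : UniqueDiffOn ℝ S := uniqueDiffOn_univ.prod hTu
  obtain ⟨r, hr, happrox, hfr⟩ := hG.exists_approximatesLinearOn_inter_closedBall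
    (convex_univ.prod hTc) hSu (x₀ := (b₀, q₀)) ⟨mem_univ b₀, hq₀⟩ (c := 2⁻¹) (by norm_num)
  set V := S ∩ closedBall (b₀, q₀) r
  -- then `ξ ∈ ball (G (b₀, q₀)) δ` lies within `r / 2 = (1 - 2⁻¹) * r` of `G (b₀, w)`, a distance
  -- the slice `fun b => G (b, w)` covers from `closedBall b₀ r`
  obtain ⟨δ, hδ, hδr, hGw⟩ : ∃ δ > 0, δ ≤ r / 4 ∧
      ∀ w ∈ T ∩ ball q₀ δ, dist (G (b₀, w)) (G (b₀, q₀)) < r / 4 := by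
    obtain ⟨ε, hε, h⟩ := Metric.continuousWithinAt_iff.1 (hG.continuousOn.comp
      (continuousOn_const.prodMk continuousOn_id) (fun w hw => ⟨mem_univ b₀, hw⟩) q₀ hq₀)
      (r / 4) (by positivity)
    exact ⟨min ε (r / 4), by positivity, min_le_right _ _,
      fun w hw => h hw.1 (hw.2.trans_le (min_le_left _ _))⟩
  set D := ball (G (b₀, q₀)) δ ×ˢ (T ∩ ball q₀ δ)
  have hslice : ∀ w ∈ T ∩ ball q₀ δ, MapsTo (fun b => (b, w)) (closedBall b₀ r) V :=
    fun w hw b hb => ⟨⟨mem_univ b, hw.1⟩, mem_closedBall.2 <| by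
      rw [Prod.dist_eq]; exact max_le hb ((mem_ball.1 hw.2).le.trans (by linarith))⟩
  have hslice_id : ∀ w ∈ T ∩ ball q₀ δ, ApproximatesLinearOn (fun b => G (b, w))
      (ContinuousLinearMap.id ℝ E) (closedBall b₀ r) 2⁻¹ :=
    fun w hw => hA ▸ happrox.comp_prodMk_left (hslice w hw)
  have hsol : ∀ q ∈ D, ∃ b ∈ closedBall b₀ r, G (b, q.2) = q.1 := by
    rintro ⟨ξ, w⟩ ⟨hξ, hw⟩
    refine (hslice_id w hw).surjOn_closedBall_of_id hr.le (mem_closedBall.2 ?_)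
    have := dist_triangle ξ (G (b₀, q₀)) (G (b₀, w))
    rw [dist_comm (G (b₀, q₀))] at this
    norm_num
    linarith [mem_ball.1 hξ, hGw w hw]
  choose! Z hZr hGZ using hsol
  have hZV : ∀ q ∈ D, (Z q, q.2) ∈ V := fun q hq => hslice q.2 hq.2 (hZr q hq)
  refine ⟨δ, hδ, Z, ?_, fun ξ hξ w hw => ⟨hGZ _ ⟨hξ, hw⟩, fun b hb hGb => ?_⟩⟩
  · refine contDiffOn_implicit_of_continuousOn hSu hG
      (isOpen_ball.uniqueDiffOn.prod (hTu.inter isOpen_ball))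
      (happrox.continuousOn_implicit hA (by norm_num) hZV hGZ) (fun q hq => (hZV q hq).1) hGZ
      fun q hq => ContinuousLinearMap.isInvertible_comp_inl_of_norm_sub_lt hA
        ((hfr _ (hZV q hq)).trans_lt (by norm_num))
  · have hq : (ξ, w) ∈ D := ⟨hξ, hw⟩
    exact (hslice_id w hw).injOn_of_id (by norm_num)
      (ball_subset_closedBall (ball_subset_ball (by linarith) hb)) (hZr _ hq)
      (hGb.trans (hGZ _ hq).symm)

theorem fderivWithin_comp_inl_eq_id {G : E × P → E} {T : Set P} {b₀ : E} {q₀ : P}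
    (hq₀ : q₀ ∈ T) (hG : DifferentiableWithinAt ℝ G (univ ×ˢ T) (b₀, q₀))
    (hG₀ : ∀ b, G (b, q₀) = b) :
    fderivWithin ℝ G (univ ×ˢ T) (b₀, q₀) ∘L ContinuousLinearMap.inl ℝ E P =
      ContinuousLinearMap.id ℝ E := by
  have h : HasFDerivAt (fun b => G (b, q₀))
      (fderivWithin ℝ G (univ ×ˢ T) (b₀, q₀) ∘L ContinuousLinearMap.inl ℝ E P) b₀ := by
    rw [← hasFDerivWithinAt_univ]
    exact hG.hasFDerivWithinAt.comp b₀ (hasFDerivAt_prodMk_left b₀ q₀).hasFDerivWithinAt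
      fun b _ => show (b, q₀) ∈ univ ×ˢ T from ⟨mem_univ b, hq₀⟩
  simp only [hG₀] at h
  exact h.unique (hasFDerivAt_id b₀)

end ImplicitFunction

theorem contDiffOn_vectorTime {ι E : Type*} [Fintype ι] [NormedAddCommGroup E]
    [NormedSpace ℝ E] {φ : ℝ → E → ℝ → ι → ℝ} {I : Set ℝ}
    (hφ : ContDiffOn ℝ 1 (fun p : ℝ × E × ℝ => φ p.1 p.2.1 p.2.2) (univ ×ˢ univ ×ˢ I)) (t : ℝ) :
    ContDiffOn ℝ 1 (fun p : E × (ι → ℝ) × ℝ => fun j => φ (t + p.2.1 j) p.1 p.2.2 j)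
      (univ ×ˢ univ ×ˢ I) := by
  refine contDiffOn_pi.2 fun j => ?_
  have hψ : ContDiff ℝ 1 fun p : E × (ι → ℝ) × ℝ => (t + p.2.1 j, p.1, p.2.2) := by fun_prop
  exact contDiffOn_pi.1 (hφ.comp hψ.contDiffOn fun p hp => ⟨mem_univ _, mem_univ _, hp.2.2⟩) j

theorem mapsTo_ball_prod_Ico {E F : Type*} [SeminormedAddCommGroup E] [PseudoMetricSpace F]
    {x : F} {γ δ : ℝ} (hγδ : γ ≤ δ) (hγ : γ ≤ 1) :
    MapsTo (fun p : E × F × ℝ => (p.2.1, p.1, p.2.2)) (ball 0 γ ×ˢ ball x γ ×ˢ Ico 0 γ)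
      (ball x δ ×ˢ ((univ ×ˢ Icc 0 1) ∩ ball 0 δ)) := by
  rintro ⟨Δ, ξ, ε⟩ ⟨hΔ, hξ, hε⟩
  refine ⟨ball_subset_ball hγδ hξ, ⟨mem_univ Δ, hε.1, hε.2.le.trans hγ⟩, ?_⟩
  rw [mem_ball, Prod.dist_eq]
  refine max_lt (ball_subset_ball hγδ hΔ) ?_
  rw [Prod.snd_zero, Real.dist_eq, sub_zero, abs_of_nonneg hε.1]
  exact hε.2.trans_le hγδ

theorem vector_time_cauchy_problem_general
    (n : ℕ)
    (xt : ℝ → ℝ → (Fin n → ℝ) → ℝ → (Fin n → ℝ))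
    (hinit : ∀ t₀ ζ ε, xt t₀ t₀ ζ ε = ζ)
    (hsmooth : ∀ t₀ : ℝ, ContDiffOn ℝ 1
      (fun p : ℝ × (Fin n → ℝ) × ℝ => xt p.1 t₀ p.2.1 p.2.2)
      (univ ×ˢ univ ×ˢ Icc (0 : ℝ) 1))
    (tstar : ℝ) (ξstar : Fin n → ℝ) :
    ∃ γ > (0 : ℝ), ∃ ζf : (Fin n → ℝ) → (Fin n → ℝ) → ℝ → (Fin n → ℝ),
      ζf 0 ξstar 0 = ξstar ∧
      ContDiffOn ℝ 1 (fun p : (Fin n → ℝ) × (Fin n → ℝ) × ℝ => ζf p.1 p.2.1 p.2.2)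
        (ball 0 γ ×ˢ ball ξstar γ ×ˢ Ico (0 : ℝ) γ) ∧
      ContDiffOn ℝ 1
        (fun p : ℝ × (Fin n → ℝ) × (Fin n → ℝ) × ℝ =>
          xt p.1 tstar (ζf p.2.1 p.2.2.1 p.2.2.2) p.2.2.2)
        (univ ×ˢ ball 0 γ ×ˢ ball ξstar γ ×ˢ Ico (0 : ℝ) γ) ∧
      ∀ Δ ∈ ball (0 : Fin n → ℝ) γ, ∀ ξ ∈ ball ξstar γ, ∀ ε ∈ Ico (0 : ℝ) γ,
        (∀ j : Fin n, xt (tstar + Δ j) tstar (ζf Δ ξ ε) ε j = ξ j) ∧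
        (∀ ζ' ∈ ball ξstar γ,
          (∀ j : Fin n, xt (tstar + Δ j) tstar ζ' ε j = ξ j) → ζ' = ζf Δ ξ ε) := by
  set G : (Fin n → ℝ) × (Fin n → ℝ) × ℝ → (Fin n → ℝ) :=
    fun p j => xt (tstar + p.2.1 j) tstar p.1 p.2.2 j
  have hG : ContDiffOn ℝ 1 G (univ ×ˢ univ ×ˢ Icc 0 1) :=
    contDiffOn_vectorTime (φ := fun t ζ ε => xt t tstar ζ ε) (hsmooth tstar) tstar
  have hG₀ : ∀ ζ, G (ζ, 0) = ζ := fun ζ => funext fun j => by simp [G, hinit]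
  have h0 : (0 : (Fin n → ℝ) × ℝ) ∈ univ ×ˢ Icc (0 : ℝ) 1 :=
    ⟨mem_univ _, left_mem_Icc.2 zero_le_one⟩
  obtain ⟨δ, hδ, Z, hZ, hZG⟩ := exists_implicitFunction_of_contDiffOn
    (convex_univ.prod (convex_Icc 0 1)) (uniqueDiffOn_univ.prod (uniqueDiffOn_Icc one_pos)) h0 hG
    (fderivWithin_comp_inl_eq_id h0 (hG.differentiableOn one_ne_zero _ ⟨mem_univ _, h0⟩) hG₀)
  rw [hG₀] at hZ hZG
  have hmaps := mapsTo_ball_prod_Ico (E := Fin n → ℝ) (x := ξstar) (min_le_left δ 1)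
    (min_le_right δ 1)
  have hζ := hZ.comp (by fun_prop : ContDiff ℝ 1
    fun p : (Fin n → ℝ) × (Fin n → ℝ) × ℝ => (p.2.1, p.1, p.2.2)).contDiffOn hmaps
  refine ⟨min δ 1, lt_min hδ one_pos, fun Δ ξ ε => Z (ξ, Δ, ε),
    ((hZG ξstar (mem_ball_self hδ) 0 ⟨h0, mem_ball_self hδ⟩).2 ξstar (mem_ball_self hδ)
      (hG₀ ξstar)).symm, hζ, ?_, ?_⟩
  · refine (hsmooth tstar).comp (contDiffOn_fst.prodMk
      ((hζ.comp contDiffOn_snd fun p hp => hp.2).prodMk contDiffOn_snd.snd.snd))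
      fun p hp => ⟨mem_univ _, mem_univ _, ?_⟩
    exact Ico_subset_Icc_self.trans (Icc_subset_Icc_right (min_le_right _ _)) hp.2.2.2
  · intro Δ hΔ ξ hξ ε hε
    obtain ⟨hξδ, hw⟩ := @hmaps (Δ, ξ, ε) ⟨hΔ, hξ, hε⟩
    obtain ⟨hsol, huniq⟩ := hZG ξ hξδ (Δ, ε) hw
    exact ⟨fun j => congrFun hsol j,
      fun ζ' hζ' h => huniq ζ' (ball_subset_ball (min_le_left _ _) hζ') (funext h)⟩

/-- Lemma 1: Cauchy problems with vector-valued initial time.  If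
`F ∈ C¹(ℝ×ℝⁿ×[0,1], ℝⁿ)` and the ordinary Cauchy problem for `ẋ = F(t,x,ε)` is
globally uniquely solvable with `C¹` dependence on data, then for any `t*, ξ*` there
are `γ > 0` and a `C¹` map `ζ` with `ζ(0,ξ*,0) = ξ*` such that
`x(t,Δ,ξ,ε) := x̃(t,t*,ζ(Δ,ξ,ε),ε)` is `C¹` and satisfies the vector-time initial
condition `xʲ(t* + Δʲ) = ξʲ` for each component `j`; moreover `ζ(Δ,ξ,ε)` is the only
initial point near `ξ*` whose solution satisfies this condition. -/
theorem vector_time_cauchy_problem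
    (n : ℕ)
    (F : ℝ → (Fin n → ℝ) → ℝ → (Fin n → ℝ))
    (hF : ContDiffOn ℝ 1 (fun p : ℝ × (Fin n → ℝ) × ℝ => F p.1 p.2.1 p.2.2)
      (univ ×ˢ univ ×ˢ Icc (0 : ℝ) 1))
    (xt : ℝ → ℝ → (Fin n → ℝ) → ℝ → (Fin n → ℝ))
    (hinit : ∀ t₀ ζ ε, xt t₀ t₀ ζ ε = ζ)
    (hode : ∀ (t₀ : ℝ) (ζ : Fin n → ℝ) (ε : ℝ), ε ∈ Icc (0 : ℝ) 1 →
      ∀ t, HasDerivAt (fun τ => xt τ t₀ ζ ε) (F t (xt t t₀ ζ ε) ε) t)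
    (huniq : ∀ (t₀ : ℝ) (ζ : Fin n → ℝ) (ε : ℝ), ε ∈ Icc (0 : ℝ) 1 →
      ∀ y : ℝ → (Fin n → ℝ), y t₀ = ζ →
        (∀ t, HasDerivAt y (F t (y t) ε) t) → y = fun t => xt t t₀ ζ ε)
    (hsmooth : ∀ t₀ : ℝ, ContDiffOn ℝ 1
      (fun p : ℝ × (Fin n → ℝ) × ℝ => xt p.1 t₀ p.2.1 p.2.2)
      (univ ×ˢ univ ×ˢ Icc (0 : ℝ) 1))
    (tstar : ℝ) (ξstar : Fin n → ℝ) :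
    ∃ γ > (0 : ℝ), ∃ ζf : (Fin n → ℝ) → (Fin n → ℝ) → ℝ → (Fin n → ℝ),
      ζf 0 ξstar 0 = ξstar ∧
      ContDiffOn ℝ 1 (fun p : (Fin n → ℝ) × (Fin n → ℝ) × ℝ => ζf p.1 p.2.1 p.2.2)
        (ball 0 γ ×ˢ ball ξstar γ ×ˢ Ico (0 : ℝ) γ) ∧
      ContDiffOn ℝ 1
        (fun p : ℝ × (Fin n → ℝ) × (Fin n → ℝ) × ℝ =>
          xt p.1 tstar (ζf p.2.1 p.2.2.1 p.2.2.2) p.2.2.2)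
        (univ ×ˢ ball 0 γ ×ˢ ball ξstar γ ×ˢ Ico (0 : ℝ) γ) ∧
      ∀ Δ ∈ ball (0 : Fin n → ℝ) γ, ∀ ξ ∈ ball ξstar γ, ∀ ε ∈ Ico (0 : ℝ) γ,
        (∀ j : Fin n, xt (tstar + Δ j) tstar (ζf Δ ξ ε) ε j = ξ j) ∧
        (∀ ζ' ∈ ball ξstar γ,
          (∀ j : Fin n, xt (tstar + Δ j) tstar ζ' ε j = ξ j) → ζ' = ζf Δ ξ ε) :=
  vector_time_cauchy_problem_general n xt hinit hsmooth tstar ξstar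
end

section
/- Let y be a solution (in the sense of Definition 1) of the system (ps): ẋ + h(t,x) = ε f(t,x,ε), and define u(t) := x⁻¹(t, y(t), 0). Then at every t with y(t) ∉ S the function u is differentiable and satisfies the standard form of the averaging principle (pss): u̇(t) = ε (∂_u x(t, u(t), 0))⁻¹ f(t, x(t, u(t), 0), ε). -/
/-! Write `u(τ) = x⁻¹(τ, y(τ), 0)`, so that `y(τ) = x(τ, u(τ), 0)`. The chain rule for the `C¹`
maps `x⁻¹` and `x` gives `ẏ = ∂_t x + ∂_u x · u̇`, where `∂_t x = -h(t, y)` because `x` solves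
(np). Comparing with (ps) leaves `∂_u x · u̇ = ε f(t, y, ε)`, and `∂_u x` is invertible, its inverse
being the derivative of `x⁻¹(t, ·, 0)`. -/

open Function ContinuousLinearMap

variable {𝕜 E F : Type*} [NontriviallyNormedField 𝕜]
  [NormedAddCommGroup E] [NormedSpace 𝕜 E] [NormedAddCommGroup F] [NormedSpace 𝕜 F]

theorem isInvertible_fderiv_of_inverse {f : E → F} {g : F → E} {x : E}
    (hgf : LeftInverse g f) (hfg : RightInverse g f)
    (hf : DifferentiableAt 𝕜 f x) (hg : DifferentiableAt 𝕜 g (f x)) :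
    (fderiv 𝕜 f x).IsInvertible := by
  have hf' : DifferentiableAt 𝕜 f (g (f x)) := by rwa [hgf x]
  refine IsInvertible.of_inverse (g := fderiv 𝕜 g (f x)) ?_ ?_
  · have := fderiv_comp (f x) hf' hg
    rwa [hfg.id, fderiv_id, hgf x, eq_comm] at this
  · have := fderiv_comp x hg hf
    rwa [hgf.id, fderiv_id, eq_comm] at this

theorem hasDerivAt_comp_curve_of_partials {Φ : 𝕜 → E → F} {g : 𝕜 → E} {t : 𝕜} {a : F} {g' : E}
    (hΦ : DifferentiableAt 𝕜 (uncurry Φ) (t, g t))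
    (ha : HasDerivAt (fun τ => Φ τ (g t)) a t) (hg : HasDerivAt g g' t) :
    HasDerivAt (fun τ => Φ τ (g τ)) (a + fderiv 𝕜 (Φ t) (g t) g') t := by
  set L := fderiv 𝕜 (uncurry Φ) (t, g t)
  have hL : HasFDerivAt (uncurry Φ) L (t, g t) := hΦ.hasFDerivAt
  have h_time : L (1, 0) = a := by
    have : HasDerivAt (fun τ => Φ τ (g t)) (L (1, 0)) t :=
      HasFDerivAt.comp_hasDerivAt (l := uncurry Φ) t hL
        ((hasDerivAt_id t).prodMk (hasDerivAt_const t (g t)))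
    exact this.unique ha
  have h_space : L ∘L inr 𝕜 𝕜 E = fderiv 𝕜 (Φ t) (g t) :=
    (hL.comp (g t) (hasFDerivAt_prodMk_right t (g t))).fderiv.symm
  refine (HasFDerivAt.comp_hasDerivAt (l := uncurry Φ) t hL
    ((hasDerivAt_id t).prodMk hg)).congr_deriv ?_
  rw [← h_time, ← h_space, ContinuousLinearMap.comp_apply, inr_apply, ← map_add,
    Prod.mk_add_mk, add_zero, zero_add]

theorem change_of_variables_to_standard_form_general
    (n : ℕ) (ε : ℝ)
    (h : ℝ → (Fin n → ℝ) → (Fin n → ℝ))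
    (f : ℝ → (Fin n → ℝ) → ℝ → (Fin n → ℝ))
    (S : Set (Fin n → ℝ))
    -- X t ξ = x(t,ξ,0) is the flow of the generating system (np): ẋ + h(t,x) = 0,
    -- a C¹ diffeomorphism in ξ with inverse Xinv t = x⁻¹(t,·,0)
    (X Xinv : ℝ → (Fin n → ℝ) → (Fin n → ℝ))
    (hXode : ∀ (ξ : Fin n → ℝ) (t : ℝ), HasDerivAt (fun τ => X τ ξ) (-h t (X t ξ)) t)
    (hXsmooth : ContDiff ℝ 1 (fun p : ℝ × (Fin n → ℝ) => X p.1 p.2))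
    (hXinvsmooth : ContDiff ℝ 1 (fun p : ℝ × (Fin n → ℝ) => Xinv p.1 p.2))
    (hXinv : ∀ (t : ℝ) (ξ : Fin n → ℝ), Xinv t (X t ξ) = ξ ∧ X t (Xinv t ξ) = ξ)
    -- y is a solution of (ps) in the sense of Definition 1
    (y : ℝ → (Fin n → ℝ))
    (hysol : ∀ t, y t ∉ S → HasDerivAt y (ε • f t (y t) ε - h t (y t)) t) :
    ∀ t, y t ∉ S →
      HasDerivAt (fun τ => Xinv τ (y τ))
        (ε • (fderiv ℝ (X t) (Xinv t (y t))).inverse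
          (f t (X t (Xinv t (y t))) ε)) t := by
  intro t hyt
  have hy := hysol t hyt
  set u := fun τ => Xinv τ (y τ)
  have hXu : ∀ τ, X τ (u τ) = y τ := fun τ => (hXinv τ (y τ)).2
  have hu : HasDerivAt u (deriv u t) t := by
    have hXinv_diff : DifferentiableAt ℝ (uncurry Xinv) (t, y t) :=
      hXinvsmooth.differentiable one_ne_zero _
    exact (hXinv_diff.comp t (differentiableAt_id.prodMk hy.differentiableAt)).hasDerivAt
  have hA : (fderiv ℝ (X t) (u t)).IsInvertible :=
    isInvertible_fderiv_of_inverse (fun ξ => (hXinv t ξ).1) (fun ξ => (hXinv t ξ).2)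
      ((hXsmooth.comp (contDiff_const.prodMk contDiff_id)).differentiable one_ne_zero _)
      ((hXinvsmooth.comp (contDiff_const.prodMk contDiff_id)).differentiable one_ne_zero _)
  have hy' : HasDerivAt y (-h t (y t) + fderiv ℝ (X t) (u t) (deriv u t)) t := by
    simpa only [hXu] using hasDerivAt_comp_curve_of_partials
      (hXsmooth.differentiable one_ne_zero (t, u t)) (hXode (u t) t) hu
  have hAu : fderiv ℝ (X t) (u t) (deriv u t) = ε • f t (y t) ε := by
    have := hy'.unique hy
    rwa [neg_add_eq_sub, sub_left_inj] at this
  refine hu.congr_deriv ?_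
  rw [hXu, ← map_smul, ← hAu, hA.inverse_apply_self]

/-- the change of variables `u(t) = x⁻¹(t, y(t), 0)` transforms any
solution `y` (in the sense of Definition 1) of the discontinuous system
(ps): `ẋ + h(t,x) = ε f(t,x,ε)` into a solution of the standard form of the
averaging principle (pss): `u̇ = ε (∂_u x(t,u,0))⁻¹ f(t, x(t,u,0), ε)`, at every
time `t` with `y(t) ∉ S`. -/
theorem change_of_variables_to_standard_form
    (n : ℕ) (T ε : ℝ)
    (h : ℝ → (Fin n → ℝ) → (Fin n → ℝ))
    (hh : ContDiff ℝ 1 (fun p : ℝ × (Fin n → ℝ) => h p.1 p.2))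
    (f : ℝ → (Fin n → ℝ) → ℝ → (Fin n → ℝ))
    (hfper : ∀ t ξ ε', f (t + T) ξ ε' = f t ξ ε')
    (S : Set (Fin n → ℝ))
    (hf : ∀ (t ε' : ℝ), ε' ∈ Set.Icc (0 : ℝ) 1 → ∀ ξ ∉ S,
      ContDiffAt ℝ 1 (fun ζ => f t ζ ε') ξ)
    -- X t ξ = x(t,ξ,0) is the flow of the generating system (np): ẋ + h(t,x) = 0,
    -- a C¹ diffeomorphism in ξ with inverse Xinv t = x⁻¹(t,·,0)
    (X Xinv : ℝ → (Fin n → ℝ) → (Fin n → ℝ))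
    (hX0 : ∀ ξ, X 0 ξ = ξ)
    (hXode : ∀ (ξ : Fin n → ℝ) (t : ℝ), HasDerivAt (fun τ => X τ ξ) (-h t (X t ξ)) t)
    (hXsmooth : ContDiff ℝ 1 (fun p : ℝ × (Fin n → ℝ) => X p.1 p.2))
    (hXinvsmooth : ContDiff ℝ 1 (fun p : ℝ × (Fin n → ℝ) => Xinv p.1 p.2))
    (hXinv : ∀ (t : ℝ) (ξ : Fin n → ℝ), Xinv t (X t ξ) = ξ ∧ X t (Xinv t ξ) = ξ)
    -- y is a solution of (ps) in the sense of Definition 1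
    (y : ℝ → (Fin n → ℝ))
    (hycont : Continuous y)
    (hysol : ∀ t, y t ∉ S → HasDerivAt y (ε • f t (y t) ε - h t (y t)) t) :
    ∀ t, y t ∉ S →
      HasDerivAt (fun τ => Xinv τ (y τ))
        (ε • (fderiv ℝ (X t) (Xinv t (y t))).inverse
          (f t (X t (Xinv t (y t))) ε)) t :=
  change_of_variables_to_standard_form_general n ε h f S X Xinv hXode hXsmooth hXinvsmooth hXinv y
    hysol
end

section
/- Let A₀ be a real n×n matrix all of whose complex eigenvalues have negative real part, and let (A_ε)_{ε>0} be real n×n matrices with A_ε → A₀ as ε → 0⁺. Then there exists ε₀ > 0 such that for every ε ∈ (0, ε₀] every complex eigenvalue of the matrix I + ε A_ε has modulus strictly less than 1. -/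
/-! The condition `‖1 + εν‖ < 1` says that `ν` lies in the open disc `D_ε` of radius `1/ε` about
`-1/ε`. These discs grow as `ε ↓ 0` and exhaust the open left half-plane, so by compactness the
spectrum of `A₀` lies in a single `D_{ε₁}`. The spectrum is upper semicontinuous, hence the
spectrum of `A_ε` also lies in `D_{ε₁} ⊆ D_ε` for small `ε ≤ ε₁`, and
`σ(I + ε A_ε) = 1 + ε σ(A_ε)` is then inside the unit disc. -/

open Filter Topology Set
open scoped Pointwise

lemma norm_add_smul_lt_norm_of_le {E : Type*} [SeminormedAddCommGroup E] [NormedSpace ℝ E]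
    {x v : E} {ε ε' : ℝ} (hε' : 0 < ε') (hle : ε' ≤ ε) (h : ‖x + ε • v‖ < ‖x‖) :
    ‖x + ε' • v‖ < ‖x‖ := by
  have hε : 0 < ε := hε'.trans_le hle
  set t := ε' / ε
  have ht : 0 < t := div_pos hε' hε
  have ht1 : t ≤ 1 := (div_le_one hε).2 hle
  have hcombo : x + ε' • v = (1 - t) • x + t • (x + ε • v) := by
    rw [smul_add, smul_smul, div_mul_cancel₀ _ hε.ne']; module
  calc ‖x + ε' • v‖ ≤ (1 - t) * ‖x‖ + t * ‖x + ε • v‖ := by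
        rw [hcombo]
        refine (norm_add_le _ _).trans_eq ?_
        rw [norm_smul, norm_smul, Real.norm_of_nonneg (sub_nonneg.2 ht1), Real.norm_of_nonneg ht.le]
    _ < (1 - t) * ‖x‖ + t * ‖x‖ := by gcongr
    _ = ‖x‖ := by ring

lemma Complex.exists_norm_one_add_smul_lt_one {ν : ℂ} (h : ν.re < 0) :
    ∃ ε > (0 : ℝ), ‖1 + ε • ν‖ < 1 := by
  have hν : 0 < normSq ν := normSq_pos.2 (by rintro rfl; simp at h)
  set ε := -ν.re / normSq ν
  have hε : 0 < ε := div_pos (neg_pos.2 h) hν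
  have hεν : ε * (ν.re * ν.re + ν.im * ν.im) = -ν.re := by
    rw [← normSq_apply]; exact div_mul_cancel₀ _ hν.ne'
  -- with this choice `‖1 + εν‖² = 1 + ε re ν`
  refine ⟨ε, hε, ?_⟩
  rw [← sq_lt_one_iff₀ (norm_nonneg _), Complex.sq_norm, normSq_apply]
  simp only [add_re, one_re, smul_re, smul_eq_mul, add_im, one_im, smul_im, zero_add]
  nlinarith [mul_pos hε (neg_pos.2 h)]

lemma IsCompact.exists_forall_norm_one_add_smul_lt_one {K : Set ℂ} (hK : IsCompact K)
    (hre : ∀ ν ∈ K, ν.re < 0) : ∃ ε > (0 : ℝ), ∀ ν ∈ K, ‖1 + ε • ν‖ < 1 := by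
  let D : Ioi (0 : ℝ) → Set ℂ := fun ε ↦ {ν | ‖1 + (ε : ℝ) • ν‖ < 1}
  have hD_open (ε) : IsOpen (D ε) := isOpen_lt (by fun_prop) continuous_const
  have hD_cover : K ⊆ ⋃ ε, D ε := fun ν hν ↦ by
    obtain ⟨ε, hε, hlt⟩ := Complex.exists_norm_one_add_smul_lt_one (hre ν hν)
    exact mem_iUnion.2 ⟨⟨ε, hε⟩, hlt⟩
  have hD_antitone {ε ε' : Ioi (0 : ℝ)} (hle : ε' ≤ ε) : D ε ⊆ D ε' := fun ν hν ↦ by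
    simpa [D] using norm_add_smul_lt_norm_of_le (x := (1 : ℂ)) ε'.2 hle (by simpa [D] using hν)
  have hD_directed : Directed (· ⊆ ·) D := fun ε ε' ↦
    ⟨min ε ε', hD_antitone (min_le_left _ _), hD_antitone (min_le_right _ _)⟩
  obtain ⟨ε, hε⟩ := hK.elim_directed_cover D hD_open hD_cover hD_directed
  exact ⟨ε, ε.2, hε⟩

lemma spectrum.one_add_smul_eq {𝕜 A : Type*} [Field 𝕜] [Ring A] [Algebra 𝕜 A] (a : A) {c : 𝕜}
    (hc : c ≠ 0) : spectrum 𝕜 (1 + c • a) = {1} + c • spectrum 𝕜 a := by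
  rw [← map_one (algebraMap 𝕜 A), ← spectrum.singleton_add_eq, ← Units.val_mk0 hc,
    ← Units.smul_def, spectrum.unit_smul_eq_smul]
  rfl

theorem eventually_norm_lt_one_of_mem_spectrum_one_add_smul {A : Type*} [NormedRing A]
    [NormedAlgebra ℂ A] [CompleteSpace A] {a₀ : A} (ha₀ : ∀ ν ∈ spectrum ℂ a₀, ν.re < 0)
    {a : ℝ → A} (ha : Tendsto a (𝓝[>] 0) (𝓝 a₀)) :
    ∀ᶠ ε : ℝ in 𝓝[>] 0, ∀ μ ∈ spectrum ℂ (1 + (ε : ℂ) • a ε), ‖μ‖ < 1 := by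
  obtain ⟨ε₁, hε₁, hD⟩ := (spectrum.isCompact a₀).exists_forall_norm_one_add_smul_lt_one ha₀
  have hD_open : IsOpen {ν : ℂ | ‖1 + ε₁ • ν‖ < 1} := isOpen_lt (by fun_prop) continuous_const
  have hspec : ∀ᶠ ε in 𝓝[>] 0, spectrum ℂ (a ε) ⊆ {ν | ‖1 + ε₁ • ν‖ < 1} :=
    ha.eventually ((upperHemicontinuous_spectrum ℂ A).forall_isOpen a₀ _ hD_open hD)
  filter_upwards [hspec, Ioo_mem_nhdsGT hε₁] with ε hsub ⟨hε, hεε₁⟩ μ hμ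
  rw [spectrum.one_add_smul_eq _ (Complex.ofReal_ne_zero.2 hε.ne')] at hμ
  obtain ⟨_, rfl, _, ⟨ν, hν, rfl⟩, rfl⟩ := hμ
  simpa [Complex.coe_smul] using
    norm_add_smul_lt_norm_of_le (x := (1 : ℂ)) hε hεε₁.le (by simpa using hsub hν)

/-- If all complex eigenvalues of the real matrix `A₀` have negative real
part and `A ε → A₀` as `ε → 0⁺`, then for all small `ε > 0` every complex eigenvalue of
`I + ε • A ε` has modulus strictly less than `1`. -/
theorem eigenvalues_of_one_add_smul_lt_one
    (n : ℕ) (A₀ : Matrix (Fin n) (Fin n) ℝ)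
    (hA₀ : ∀ μ ∈ spectrum ℂ (A₀.map Complex.ofReal), μ.re < 0)
    (A : ℝ → Matrix (Fin n) (Fin n) ℝ)
    (hA : Filter.Tendsto A (nhdsWithin 0 (Set.Ioi 0)) (nhds A₀)) :
    ∃ ε₀ > (0 : ℝ), ∀ ε ∈ Set.Ioc (0 : ℝ) ε₀,
      ∀ μ ∈ spectrum ℂ (((1 : Matrix (Fin n) (Fin n) ℝ) + ε • A ε).map Complex.ofReal),
        ‖μ‖ < 1 := by
  -- a Banach-algebra norm on complex matrices; it induces the entrywise topology used in `hA`
  let := Matrix.linftyOpNormedRing (n := Fin n) (α := ℂ)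
  let := Matrix.linftyOpNormedAlgebra (n := Fin n) (α := ℂ) (R := ℂ)
  have hAℂ : Tendsto (fun ε ↦ (A ε).map Complex.ofReal) (𝓝[>] 0) (𝓝 (A₀.map Complex.ofReal)) :=
    ((continuous_id.matrix_map Complex.continuous_ofReal).tendsto A₀).comp hA
  have hmap (ε : ℝ) : ((1 : Matrix (Fin n) (Fin n) ℝ) + ε • A ε).map Complex.ofReal =
      1 + (ε : ℂ) • (A ε).map Complex.ofReal := by
    ext i j; simp [Matrix.one_apply, apply_ite]
  obtain ⟨ε₀, hε₀, hsub⟩ := mem_nhdsGT_iff_exists_Ioc_subset.1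
    (eventually_norm_lt_one_of_mem_spectrum_one_add_smul hA₀ hAℂ)
  exact ⟨ε₀, hε₀, fun ε hε ↦ hmap ε ▸ hsub hε⟩
end

section
/- Let A₀ be a real n×n matrix having at least one complex eigenvalue with positive real part, and let (A_ε)_{ε>0} be real n×n matrices with A_ε → A₀ as ε → 0⁺. Then there exists ε₀ > 0 such that for every ε ∈ (0, ε₀] the matrix I + ε A_ε has a complex eigenvalue of modulus strictly greater than 1. -/
/-!
If every eigenvalue `1 + ε a` of `I + ε A_ε` had modulus at most `1`, every eigenvalue `a` of `A_ε`
would satisfy `Re a ≤ 0`, since `1 + ε Re a ≤ |1 + ε a|`. For `μ` an eigenvalue of `A₀` with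
`Re μ > 0` this gives `|det (μ I - A_ε)| = ∏ |μ - a| ≥ (Re μ)ⁿ`, which is incompatible with
`det (μ I - A_ε) → det (μ I - A₀) = 0`.
-/

open Polynomial Filter Set Topology

theorem Complex.one_lt_norm_one_add_mul {ε : ℝ} (hε : 0 < ε) {a : ℂ} (ha : 0 < a.re) :
    1 < ‖1 + ε * a‖ :=
  calc (1 : ℝ) < (1 + ε * a).re := by simpa using mul_pos hε ha
    _ ≤ ‖1 + ε * a‖ := Complex.re_le_norm _

theorem Polynomial.re_pow_natDegree_le_norm_eval {p : ℂ[X]} (hp : p.Monic) {μ : ℂ}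
    (hμ : 0 ≤ μ.re) (hroots : ∀ a ∈ p.roots, a.re ≤ 0) :
    μ.re ^ p.natDegree ≤ ‖p.eval μ‖ := by
  have hsplit : p.Splits := IsAlgClosed.splits p
  rw [hsplit.eval_eq_prod_roots_of_monic hp μ, hsplit.natDegree_eq_card_roots,
    ← Multiset.prod_replicate, ← Multiset.map_const', ← normHom_apply, map_multiset_prod,
    Multiset.map_map]
  refine Multiset.prod_map_le_prod_map₀ _ _ (fun _ _ => hμ) fun a ha => ?_
  calc μ.re ≤ (μ - a).re := by simp [hroots a ha]
    _ ≤ ‖μ - a‖ := Complex.re_le_norm _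

theorem Matrix.re_pow_card_le_norm_eval_charpoly {ι : Type*} [Fintype ι] [DecidableEq ι]
    (M : Matrix ι ι ℂ) {μ : ℂ} (hμ : 0 ≤ μ.re) (hM : ∀ a ∈ spectrum ℂ M, a.re ≤ 0) :
    μ.re ^ Fintype.card ι ≤ ‖M.charpoly.eval μ‖ := by
  rw [← M.charpoly_natDegree_eq_dim]
  refine re_pow_natDegree_le_norm_eval M.charpoly_monic hμ fun a ha => hM a ?_
  exact Matrix.mem_spectrum_iff_isRoot_charpoly.mpr (isRoot_of_mem_roots ha)

theorem Matrix.continuous_eval_charpoly {ι R : Type*} [Fintype ι] [DecidableEq ι] [CommRing R]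
    [TopologicalSpace R] [IsTopologicalRing R] (t : R) :
    Continuous fun M : Matrix ι ι R => M.charpoly.eval t := by
  simp_rw [Matrix.eval_charpoly]
  exact (continuous_const.sub continuous_id).matrix_det

theorem spectrum.one_add_mul_mem_one_add_smul {𝕜 A : Type*} [Field 𝕜] [IsAlgClosed 𝕜] [Ring A]
    [Algebra 𝕜 A] {a : A} {r : 𝕜} (hr : r ∈ spectrum 𝕜 a) (c : 𝕜) :
    1 + c * r ∈ spectrum 𝕜 (1 + c • a) := by
  have := spectrum.subset_polynomial_aeval a (1 + C c * X) ⟨r, hr, rfl⟩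
  simpa [Algebra.smul_def] using this

/-- If the real matrix `A₀` has a complex eigenvalue with positive real
part and `A ε → A₀` as `ε → 0⁺`, then for all small `ε > 0` the matrix `I + ε • A ε`
has a complex eigenvalue of modulus strictly greater than `1`. -/
theorem exists_eigenvalue_of_one_add_smul_gt_one
    (n : ℕ) (A₀ : Matrix (Fin n) (Fin n) ℝ)
    (hA₀ : ∃ μ ∈ spectrum ℂ (A₀.map Complex.ofReal), 0 < μ.re)
    (A : ℝ → Matrix (Fin n) (Fin n) ℝ)
    (hA : Filter.Tendsto A (nhdsWithin 0 (Set.Ioi 0)) (nhds A₀)) :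
    ∃ ε₀ > (0 : ℝ), ∀ ε ∈ Set.Ioc (0 : ℝ) ε₀,
      ∃ μ ∈ spectrum ℂ (((1 : Matrix (Fin n) (Fin n) ℝ) + ε • A ε).map Complex.ofReal),
        1 < ‖μ‖ := by
  obtain ⟨μ, hμ, hμre⟩ := hA₀
  have hcharpoly : Tendsto (fun ε => ‖((A ε).map Complex.ofReal).charpoly.eval μ‖) (𝓝[>] 0)
      (𝓝 0) := by
    have hcont := (Matrix.continuous_eval_charpoly (ι := Fin n) μ).comp
      (continuous_id.matrix_map Complex.continuous_ofReal)
    simpa [(Matrix.mem_spectrum_iff_isRoot_charpoly.mp hμ).eq_zero] using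
      ((hcont.tendsto A₀).comp hA).norm
  obtain ⟨ε₀, hε₀, hsmall⟩ := mem_nhdsGT_iff_exists_Ioc_subset.mp
    (hcharpoly.eventually_lt_const (pow_pos hμre n))
  refine ⟨ε₀, hε₀, fun ε hε => ?_⟩
  obtain ⟨a, ha, hare⟩ : ∃ a ∈ spectrum ℂ ((A ε).map Complex.ofReal), 0 < a.re := by
    by_contra! hnonpos
    have hlarge := ((A ε).map Complex.ofReal).re_pow_card_le_norm_eval_charpoly hμre.le hnonpos
    rw [Fintype.card_fin] at hlarge
    exact (hsmall hε).not_ge hlarge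
  have hmap : ((1 : Matrix (Fin n) (Fin n) ℝ) + ε • A ε).map Complex.ofReal =
      1 + (ε : ℂ) • (A ε).map Complex.ofReal := by
    ext i j
    simp [Matrix.one_apply, apply_ite]
  refine ⟨1 + ε * a, ?_, Complex.one_lt_norm_one_add_mul hε.1 hare⟩
  rw [hmap]
  exact spectrum.one_add_mul_mem_one_add_smul ha _
end

section
/- Let a, b ∈ ℝ and define E(x) = (sign(x) + 1)/2 (so E(x) = 1 for x > 0, E(x) = 0 for x < 0). Then for every ξ ∈ (−1, 1): ∫₀^{2π} ( −a E(ξ + sin τ) + b E(−ξ − sin τ) ) dτ = (b − a)π − 2(a + b) arcsin ξ. -/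
/-!
With `c = arcsin ξ`, the quantity `ξ + sin τ` is positive on `(-c, π + c)` and negative on
`(π + c, 2π - c)`, so over the period `[-c, 2π - c]` the integrand equals `-a` on an interval of
length `π + 2c` and `b` on one of length `π - 2c`, up to finitely many points.
-/

open Real Set MeasureTheory

section ConstantOnIoo

variable {F : Type*} [NormedAddCommGroup F] {f : ℝ → F} {a b : ℝ} {v : F}

theorem intervalIntegrable_of_eqOn_Ioo (hab : a ≤ b) (h : EqOn f (fun _ ↦ v) (Ioo a b)) :
    IntervalIntegrable f volume a b := by
  rw [intervalIntegrable_iff_integrableOn_Ioc_of_le hab, IntegrableOn,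
    ← Measure.restrict_congr_set Ioo_ae_eq_Ioc]
  exact (integrableOn_const (by simp)).congr_fun h.symm measurableSet_Ioo

theorem intervalIntegral.integral_eq_of_eqOn_Ioo [NormedSpace ℝ F] [CompleteSpace F] (hab : a ≤ b)
    (h : EqOn f (fun _ ↦ v) (Ioo a b)) : ∫ x in a..b, f x = (b - a) • v := by
  rw [intervalIntegral.integral_of_le hab, integral_Ioc_eq_integral_Ioo,
    setIntegral_congr_fun measurableSet_Ioo h, setIntegral_const, Real.volume_real_Ioo_of_le hab]

end ConstantOnIoo

theorem sin_lt_sin_of_mem_Ioo {c τ : ℝ} (hc : c ∈ Icc (-(π / 2)) (π / 2))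
    (hτ : τ ∈ Ioo c (π - c)) : sin c < sin τ := by
  obtain ⟨hc₁, hc₂⟩ := hc
  obtain ⟨hτ₁, hτ₂⟩ := hτ
  rcases le_or_gt τ (π / 2) with h | h
  · exact strictMonoOn_sin ⟨hc₁, hc₂⟩ ⟨by linarith, h⟩ hτ₁
  · rw [← sin_pi_sub τ]
    exact strictMonoOn_sin ⟨hc₁, hc₂⟩ ⟨by linarith, by linarith⟩ (by linarith)

theorem add_sin_pos {ξ τ : ℝ} (hξ : ξ ∈ Icc (-1) 1) (hτ : τ ∈ Ioo (-arcsin ξ) (π + arcsin ξ)) :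
    0 < ξ + sin τ := by
  have := sin_lt_sin_of_mem_Ioo (c := -arcsin ξ) ⟨by linarith [arcsin_le_pi_div_two ξ],
    by linarith [neg_pi_div_two_le_arcsin ξ]⟩ (by rwa [sub_neg_eq_add])
  rw [sin_neg, sin_arcsin hξ.1 hξ.2] at this
  linarith

theorem add_sin_neg {ξ τ : ℝ} (hξ : ξ ∈ Icc (-1) 1)
    (hτ : τ ∈ Ioo (π + arcsin ξ) (2 * π - arcsin ξ)) : ξ + sin τ < 0 := by
  have := add_sin_pos (ξ := -ξ) (τ := τ - π) ⟨by linarith [hξ.2], by linarith [hξ.1]⟩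
    (by rw [arcsin_neg]; constructor <;> linarith [hτ.1, hτ.2])
  rw [sin_sub_pi] at this
  linarith

/-- the averaged function of the dry-friction system.  With
`E(x) = (sign x + 1)/2`, for every `ξ ∈ (−1,1)`:
`∫₀^{2π} (−a E(ξ + sin τ) + b E(−ξ − sin τ)) dτ = (b − a)π − 2(a + b) arcsin ξ`. -/
theorem averaged_dry_friction
    (a b : ℝ) (E : ℝ → ℝ) (hE : ∀ x, E x = (Real.sign x + 1) / 2)
    (ξ : ℝ) (hξ : ξ ∈ Set.Ioo (-1 : ℝ) 1) :
    ∫ τ in (0 : ℝ)..(2 * π), (-a * E (ξ + Real.sin τ) + b * E (-ξ - Real.sin τ))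
      = (b - a) * π - 2 * (a + b) * Real.arcsin ξ := by
  set c := arcsin ξ
  set f : ℝ → ℝ := fun τ ↦ -a * E (ξ + sin τ) + b * E (-ξ - sin τ)
  have hc₁ : -(π / 2) < c := neg_pi_div_two_lt_arcsin.mpr hξ.1
  have hc₂ : c < π / 2 := arcsin_lt_pi_div_two.mpr hξ.2
  have hf_periodic : Function.Periodic f (2 * π) := fun τ ↦ by simp [f, sin_add_two_pi]
  have hf_pos : EqOn f (fun _ ↦ -a) (Ioo (-c) (π + c)) := fun τ hτ ↦ by
    have h := add_sin_pos (Ioo_subset_Icc_self hξ) hτ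
    simp [f, hE, sign_of_pos h, sign_of_neg (show -ξ - sin τ < 0 by linarith)]
  have hf_neg : EqOn f (fun _ ↦ b) (Ioo (π + c) (2 * π - c)) := fun τ hτ ↦ by
    have h := add_sin_neg (Ioo_subset_Icc_self hξ) hτ
    simp [f, hE, sign_of_neg h, sign_of_pos (show 0 < -ξ - sin τ by linarith)]
  have h₁ : -c ≤ π + c := by linarith
  have h₂ : π + c ≤ 2 * π - c := by linarith
  calc ∫ τ in (0 : ℝ)..(2 * π), f τ
      = ∫ τ in -c..(-c + 2 * π), f τ := by rw [← hf_periodic.intervalIntegral_add_eq, zero_add]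
    _ = (∫ τ in -c..(π + c), f τ) + ∫ τ in (π + c)..(2 * π - c), f τ := by
        rw [intervalIntegral.integral_add_adjacent_intervals
          (intervalIntegrable_of_eqOn_Ioo h₁ hf_pos) (intervalIntegrable_of_eqOn_Ioo h₂ hf_neg)]
        ring_nf
    _ = (b - a) * π - 2 * (a + b) * c := by
        rw [intervalIntegral.integral_eq_of_eqOn_Ioo h₁ hf_pos,
          intervalIntegral.integral_eq_of_eqOn_Ioo h₂ hf_neg, smul_eq_mul, smul_eq_mul]
        ring
end
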